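/- Write Q(t) = ∑_{k=0}^{2d} q_k t^k with q_k the coefficients of Q, and for 1 ≤ l ≤ 2d let c_l = 2 P'(−⌈l/2⌉²) be the nonzero constants for which Q'(d/dx)φ_l = c_l φ_l'. Then for every integer r ≥ 1, the vector field ξ_r := ∑_{k=0}^{2d} q_k · ad_V^{r+k−1}(W) satisfies ξ_r(x, y, z) = (0, −∑_{l=1}^{2d} c_l φ_l^{(r)}(x)(Z_l h)(z), 0); that is, ξ_r = −∑_l c_l φ_l^{(r)} (Z_l h) ∂/∂y. -/

import Mathlib

/-- `φ_{2j-1}(x) = sin (j x)` and `φ_{2j}(x) = cos (j x)`; here `(l+1)/2 = ⌈l/2⌉`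
(natural division) is the index `j` corresponding to `l`. -/
noncomputable def phi (l : ℕ) : ℝ → ℝ := fun x =>
  if l % 2 = 1 then Real.sin ((((l + 1) / 2 : ℕ) : ℝ) * x)
  else Real.cos ((((l + 1) / 2 : ℕ) : ℝ) * x)

/-- The Lie bracket of two vector fields on a real normed space:
`[X, Y](p) = DY(p) X(p) - DX(p) Y(p)`. -/
noncomputable def lieBracket {E : Type*} [NormedAddCommGroup E] [NormedSpace ℝ E]
    (X Y : E → E) : E → E := fun p =>
  fderiv ℝ Y p (X p) - fderiv ℝ X p (Y p)

/-- `adIter X Y α = ad_X^α (Y)`, the `α`-fold iterated bracket `[X, [X, …, [X, Y]…]]`,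
with `adIter X Y 0 = Y`. -/
noncomputable def adIter {E : Type*} [NormedAddCommGroup E] [NormedSpace ℝ E]
    (X Y : E → E) : ℕ → E → E
  | 0 => Y
  | (α + 1) => lieBracket X (adIter X Y α)

/-- The vector field `V(x, y, z) = ∂/∂x + h(z) ∂/∂y` on `ℝ × ℝ × ℝⁿ`. -/
def Vfield (n : ℕ) (h : (Fin n → ℝ) → ℝ) :
    ℝ × ℝ × (Fin n → ℝ) → ℝ × ℝ × (Fin n → ℝ) := fun p => (1, h p.2.2, 0)

/-- The vector field `W(x, y, z) = ∑_{l=1}^{2d} φ_l(x) Z_l(z)` on `ℝ × ℝ × ℝⁿ`. -/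
noncomputable def Wfield (n d : ℕ) (Z : ℕ → (Fin n → ℝ) → (Fin n → ℝ)) :
    ℝ × ℝ × (Fin n → ℝ) → ℝ × ℝ × (Fin n → ℝ) := fun p =>
  (0, 0, ∑ l ∈ Finset.Icc 1 (2 * d), phi l p.1 • Z l p.2.2)

open Polynomial

/-! ### Auxiliary facts about `phi` -/

lemma contDiff_phi (l : ℕ) : ContDiff ℝ (⊤ : ℕ∞) (phi l) := by
  unfold phi
  by_cases hl : l % 2 = 1 <;> simp only [hl, if_true, if_false]
  · exact Real.contDiff_sin.comp (contDiff_const.mul contDiff_id)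
  · exact Real.contDiff_cos.comp (contDiff_const.mul contDiff_id)

lemma hasDerivAt_sin_mul (c x : ℝ) :
    HasDerivAt (fun x => Real.sin (c * x)) (c * Real.cos (c * x)) x := by
  simpa [mul_comm, Function.comp_def] using
    (Real.hasDerivAt_sin (c * x)).comp x (by simpa using (hasDerivAt_id x).const_mul c)

lemma hasDerivAt_cos_mul (c x : ℝ) :
    HasDerivAt (fun x => Real.cos (c * x)) (-(c * Real.sin (c * x))) x := by
  have := (Real.hasDerivAt_cos (c * x)).comp x (by simpa using (hasDerivAt_id x).const_mul c)
  simpa [mul_comm, Function.comp_def] using this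

lemma deriv2_phi (l : ℕ) :
    deriv (deriv (phi l)) = fun x => -((((l + 1) / 2 : ℕ) : ℝ)) ^ 2 * phi l x := by
  set c : ℝ := (((l + 1) / 2 : ℕ) : ℝ) with hc
  unfold phi
  by_cases hl : l % 2 = 1 <;> simp only [hl, if_true, if_false]
  · have h1 : deriv (fun x => Real.sin (c * x)) = fun x => c * Real.cos (c * x) := by
      funext x; exact (hasDerivAt_sin_mul c x).deriv
    rw [h1]
    funext x
    have := ((hasDerivAt_cos_mul c x).const_mul c).deriv
    rw [this]; ring
  · have h1 : deriv (fun x => Real.cos (c * x)) = fun x => -(c * Real.sin (c * x)) := by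
      funext x; exact (hasDerivAt_cos_mul c x).deriv
    rw [h1]
    funext x
    have h2 : deriv (fun x => -(c * Real.sin (c * x))) x = -(c * (c * Real.cos (c * x))) := by
      have := ((hasDerivAt_sin_mul c x).const_mul c).neg
      exact this.deriv
    rw [h2]; ring

lemma iteratedDeriv_const_mul_fun {f : ℝ → ℝ} (hf : ContDiff ℝ (⊤ : ℕ∞) f) (c : ℝ) (i : ℕ) :
    iteratedDeriv i (fun x => c * f x) = fun x => c * iteratedDeriv i f x := by
  induction i with
  | zero => simp
  | succ i ih =>
    rw [iteratedDeriv_succ, ih, iteratedDeriv_succ]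
    funext x
    exact deriv_const_mul c ((hf.differentiable_iteratedDeriv i (by
      exact_mod_cast lt_top_iff_ne_top.mpr (by simp))) x)

lemma iteratedDeriv_phi_add_two (l i : ℕ) :
    iteratedDeriv (i + 2) (phi l) =
      fun x => -((((l + 1) / 2 : ℕ) : ℝ)) ^ 2 * iteratedDeriv i (phi l) x := by
  have h2 : iteratedDeriv (i + 2) (phi l) = iteratedDeriv i (deriv (deriv (phi l))) := by
    rw [show i + 2 = i + 1 + 1 from rfl, iteratedDeriv_succ', iteratedDeriv_succ']
  rw [h2, deriv2_phi]
  exact iteratedDeriv_const_mul_fun (contDiff_phi l) _ i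

/-! ### Polynomial machinery -/

section PolyMach

variable {f : ℝ → ℝ} {c : ℝ}
  (hf : ∀ i, iteratedDeriv (i + 2) f = fun x => c * iteratedDeriv i f x)

include hf

lemma iter_two_mul (i m : ℕ) :
    iteratedDeriv (m + 2 * i) f = fun x => c ^ i * iteratedDeriv m f x := by
  induction i generalizing m with
  | zero => simp
  | succ i ih =>
    rw [show m + 2 * (i + 1) = (m + 2) + 2 * i from by ring, ih (m + 2), hf m]
    funext x
    rw [pow_succ]
    ring

lemma sumA (F : ℝ[X]) (m : ℕ) (x : ℝ) :
    (F.comp (X ^ 2 : ℝ[X])).sum (fun k a => a * iteratedDeriv (m + k) f x) =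
      F.eval c * iteratedDeriv m f x := by
  induction F using Polynomial.induction_on' with
  | add p q hp hq =>
    rw [add_comp, Polynomial.sum_add_index _ _ _ (fun i => by simp) (fun a b₁ b₂ => by ring),
      hp, hq, eval_add, add_mul]
  | monomial i a =>
    have hm : (monomial i a : ℝ[X]).comp (X ^ 2) = monomial (2 * i) a := by
      rw [monomial_comp, ← pow_mul, ← C_mul_X_pow_eq_monomial]
    rw [hm, Polynomial.sum_monomial_index _ _ (by simp), eval_monomial,
      iter_two_mul hf i m]
    ring

lemma sumB {r : ℕ} (hr : 1 ≤ r) (F : ℝ[X]) (x : ℝ) :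
    c * (F.comp (X ^ 2 : ℝ[X])).sum
        (fun k a => a * ((r + k - 1 : ℕ) : ℝ) * iteratedDeriv (r + k - 1 - 1) f x) =
      (((r : ℝ) - 1) * F.eval c + 2 * c * (derivative F).eval c) * iteratedDeriv r f x := by
  induction F using Polynomial.induction_on' with
  | add p q hp hq =>
    rw [add_comp, Polynomial.sum_add_index _ _ _ (fun i => by simp) (fun a b₁ b₂ => by ring),
      mul_add, hp, hq, eval_add, derivative_add, eval_add]
    ring
  | monomial i a =>
    have hm : (monomial i a : ℝ[X]).comp (X ^ 2) = monomial (2 * i) a := by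
      rw [monomial_comp, ← pow_mul, ← C_mul_X_pow_eq_monomial]
    rw [hm, Polynomial.sum_monomial_index _ _ (by simp), eval_monomial,
      derivative_monomial, eval_monomial]
    by_cases hi : r = 1 ∧ i = 0
    · obtain ⟨hr1, hi0⟩ := hi
      subst hr1 hi0
      simp
    · have h2 : 2 ≤ r + 2 * i := by omega
      have hkey : c * iteratedDeriv (r + 2 * i - 1 - 1) f x = iteratedDeriv (r + 2 * i) f x := by
        have := congrFun (hf (r + 2 * i - 2)) x
        rw [show r + 2 * i - 2 + 2 = r + 2 * i from by omega] at this
        rw [show r + 2 * i - 1 - 1 = r + 2 * i - 2 from by omega, this]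
      have hfull : iteratedDeriv (r + 2 * i) f x = c ^ i * iteratedDeriv r f x :=
        congrFun (iter_two_mul hf i r) x
      have hcast : ((r + 2 * i - 1 : ℕ) : ℝ) = (r : ℝ) + 2 * i - 1 := by
        push_cast [Nat.cast_sub (by omega : 1 ≤ r + 2 * i)]
        ring
      rw [show c * (a * ((r + 2*i - 1 : ℕ) : ℝ) * iteratedDeriv (r + 2*i - 1 - 1) f x)
            = a * ((r + 2*i - 1 : ℕ) : ℝ) * (c * iteratedDeriv (r + 2*i - 1 - 1) f x) from by ring,
        hkey, hfull, hcast]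
      rcases Nat.eq_zero_or_pos i with hi0 | hip
      · subst hi0; norm_num [mul_comm]
      · have hpow : c ^ (i - 1) * c = c ^ i := by
          rw [← pow_succ, show i - 1 + 1 = i from by omega]
        linear_combination (-2 * a * (i : ℝ) * iteratedDeriv r f x) * hpow

end PolyMach

/-! ### The iterated brackets -/

/-- The candidate formula for `ad_V^α (W)`. -/
noncomputable def Ffield (n d : ℕ) (h : (Fin n → ℝ) → ℝ)
    (Z : ℕ → (Fin n → ℝ) → (Fin n → ℝ)) (α : ℕ) :
    ℝ × ℝ × (Fin n → ℝ) → ℝ × ℝ × (Fin n → ℝ) := fun p =>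
  (0,
    -(α : ℝ) * ∑ l ∈ Finset.Icc 1 (2 * d),
      iteratedDeriv (α - 1) (phi l) p.1 * fderiv ℝ h p.2.2 (Z l p.2.2),
    ∑ l ∈ Finset.Icc 1 (2 * d), iteratedDeriv α (phi l) p.1 • Z l p.2.2)

section Bracket

variable {n d : ℕ} {h : (Fin n → ℝ) → ℝ} {Z : ℕ → (Fin n → ℝ) → (Fin n → ℝ)}

lemma diff_iter_phi (l m : ℕ) : Differentiable ℝ (iteratedDeriv m (phi l)) :=
  (contDiff_phi l).differentiable_iteratedDeriv m
    (by exact_mod_cast lt_top_iff_ne_top.mpr (by simp))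

lemma contDiff_g (hh : ContDiff ℝ (⊤ : ℕ∞) h) (hZ : ∀ l, ContDiff ℝ (⊤ : ℕ∞) (Z l)) (l : ℕ) :
    ContDiff ℝ (⊤ : ℕ∞) (fun z => fderiv ℝ h z (Z l z)) :=
  (hh.fderiv_right (by simp)).clm_apply (hZ l)

lemma hasFDerivAt_V (hh : ContDiff ℝ (⊤ : ℕ∞) h) (p : ℝ × ℝ × (Fin n → ℝ)) :
    HasFDerivAt (Vfield n h)
      (ContinuousLinearMap.prod 0
        (ContinuousLinearMap.prod
          ((fderiv ℝ h p.2.2).comp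
            ((ContinuousLinearMap.snd ℝ ℝ (Fin n → ℝ)).comp
              (ContinuousLinearMap.snd ℝ ℝ (ℝ × (Fin n → ℝ)))))
          0)) p := by
  unfold Vfield
  apply HasFDerivAt.prodMk (hasFDerivAt_const (1 : ℝ) p)
  apply HasFDerivAt.prodMk _ (hasFDerivAt_const (0 : Fin n → ℝ) p)
  exact HasFDerivAt.comp (g := h) p ((hh.differentiable (by simp)) p.2.2).hasFDerivAt
    (hasFDerivAt_snd.comp p hasFDerivAt_snd)

lemma bracket_step (hh : ContDiff ℝ (⊤ : ℕ∞) h) (hZ : ∀ l, ContDiff ℝ (⊤ : ℕ∞) (Z l)) (α : ℕ) :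
    lieBracket (Vfield n h) (Ffield n d h Z α) = Ffield n d h Z (α + 1) := by
  funext p
  obtain ⟨x, y, z⟩ := p
  have hu : ∀ l : ℕ, HasFDerivAt
      (fun q : ℝ × ℝ × (Fin n → ℝ) => iteratedDeriv (α - 1) (phi l) q.1)
      ((ContinuousLinearMap.smulRight (1 : ℝ →L[ℝ] ℝ)
          (deriv (iteratedDeriv (α - 1) (phi l)) x)).comp
        (ContinuousLinearMap.fst ℝ ℝ (ℝ × (Fin n → ℝ)))) (x, y, z) := fun l =>
    HasFDerivAt.comp (g := iteratedDeriv (α - 1) (phi l)) _ (((diff_iter_phi l (α - 1)) x).hasDerivAt.hasFDerivAt) hasFDerivAt_fst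
  have hu2 : ∀ l : ℕ, HasFDerivAt
      (fun q : ℝ × ℝ × (Fin n → ℝ) => iteratedDeriv α (phi l) q.1)
      ((ContinuousLinearMap.smulRight (1 : ℝ →L[ℝ] ℝ)
          (deriv (iteratedDeriv α (phi l)) x)).comp
        (ContinuousLinearMap.fst ℝ ℝ (ℝ × (Fin n → ℝ)))) (x, y, z) := fun l =>
    HasFDerivAt.comp (g := iteratedDeriv α (phi l)) _ (((diff_iter_phi l α) x).hasDerivAt.hasFDerivAt) hasFDerivAt_fst
  have hzz : HasFDerivAt (fun q : ℝ × ℝ × (Fin n → ℝ) => q.2.2)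
      ((ContinuousLinearMap.snd ℝ ℝ (Fin n → ℝ)).comp
        (ContinuousLinearMap.snd ℝ ℝ (ℝ × (Fin n → ℝ)))) (x, y, z) :=
    hasFDerivAt_snd.comp _ hasFDerivAt_snd
  have hg : ∀ l : ℕ, HasFDerivAt
      (fun q : ℝ × ℝ × (Fin n → ℝ) => fderiv ℝ h q.2.2 (Z l q.2.2))
      ((fderiv ℝ (fun z => fderiv ℝ h z (Z l z)) z).comp
        ((ContinuousLinearMap.snd ℝ ℝ (Fin n → ℝ)).comp
          (ContinuousLinearMap.snd ℝ ℝ (ℝ × (Fin n → ℝ))))) (x, y, z) := fun l =>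
    HasFDerivAt.comp (g := fun z => fderiv ℝ h z (Z l z)) _ (((contDiff_g hh hZ l).differentiable (by simp)) z).hasFDerivAt hzz
  have hZl : ∀ l : ℕ, HasFDerivAt
      (fun q : ℝ × ℝ × (Fin n → ℝ) => Z l q.2.2)
      ((fderiv ℝ (Z l) z).comp
        ((ContinuousLinearMap.snd ℝ ℝ (Fin n → ℝ)).comp
          (ContinuousLinearMap.snd ℝ ℝ (ℝ × (Fin n → ℝ))))) (x, y, z) := fun l =>
    HasFDerivAt.comp (g := Z l) _ (((hZ l).differentiable (by simp)) z).hasFDerivAt hzz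
  have hy := (HasFDerivAt.sum
    (fun (l : ℕ) (_hl : l ∈ Finset.Icc 1 (2 * d)) => (hu l).mul (hg l))).const_mul (-(α : ℝ))
  have hz3 := HasFDerivAt.sum
    (fun (l : ℕ) (_hl : l ∈ Finset.Icc 1 (2 * d)) => (hu2 l).smul (hZl l))
  have hF := HasFDerivAt.prodMk (hasFDerivAt_const (0 : ℝ) ((x, y, z) : ℝ × ℝ × (Fin n → ℝ))) (HasFDerivAt.prodMk hy hz3)
  have hFf : HasFDerivAt (Ffield n d h Z α) _ ((x, y, z) : ℝ × ℝ × (Fin n → ℝ)) :=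
    hF.congr_of_eventuallyEq (Filter.Eventually.of_forall fun q => by simp [Ffield, Finset.sum_apply])
  have hV := hasFDerivAt_V hh ((x, y, z) : ℝ × ℝ × (Fin n → ℝ))
  show fderiv ℝ (Ffield n d h Z α) _ _ - fderiv ℝ (Vfield n h) _ _ = _
  rw [hFf.fderiv, hV.fderiv]
  simp only [Vfield, Ffield, ContinuousLinearMap.prod_apply, ContinuousLinearMap.comp_apply,
    ContinuousLinearMap.coe_fst', ContinuousLinearMap.coe_snd', ContinuousLinearMap.zero_apply,
    ContinuousLinearMap.smulRight_apply, ContinuousLinearMap.one_apply,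
    ContinuousLinearMap.add_apply, ContinuousLinearMap.coe_smul', Pi.smul_apply,
    ContinuousLinearMap.coe_sum', Finset.sum_apply, map_zero, map_sum, map_smul,
    smul_eq_mul, mul_one, mul_zero, add_zero, zero_add, smul_zero, Prod.mk_sub_mk, sub_zero]
  refine Prod.ext (by simp) (Prod.ext ?_ ?_)
  · simp only [one_mul, Nat.add_sub_cancel]
    cases α with
    | zero => simp
    | succ m =>
      simp only [← iteratedDeriv_succ, Nat.add_sub_cancel]
      rw [Finset.sum_congr rfl (fun l _ => mul_comm ((fderiv ℝ h z) (Z l z))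
        (iteratedDeriv (m + 1) (phi l) x))]
      push_cast
      ring
  · simp only [one_mul, ← iteratedDeriv_succ]

lemma adIter_eq (hh : ContDiff ℝ (⊤ : ℕ∞) h) (hZ : ∀ l, ContDiff ℝ (⊤ : ℕ∞) (Z l)) (α : ℕ) :
    adIter (Vfield n h) (Wfield n d Z) α = Ffield n d h Z α := by
  induction α with
  | zero =>
    funext p
    simp [adIter, Wfield, Ffield]
  | succ α ih =>
    show lieBracket (Vfield n h) (adIter (Vfield n h) (Wfield n d Z) α) = _
    rw [ih, bracket_step hh hZ]

end Bracket

/-- With `Q(t) = ∑_{k=0}^{2d} q_k t^k`, `c_l = 2 P'(-⌈l/2⌉²)`,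
and `r ≥ 1`, the field `ξ_r = ∑_{k=0}^{2d} q_k • ad_V^{r+k-1}(W)` equals
`-∑_l c_l φ_l^{(r)} (Z_l h) ∂/∂y`. -/
theorem xi_r_formula (d n : ℕ) (hd : 1 ≤ d)
    (h : (Fin n → ℝ) → ℝ) (hh : ContDiff ℝ (⊤ : ℕ∞) h)
    (Z : ℕ → (Fin n → ℝ) → (Fin n → ℝ)) (hZ : ∀ l, ContDiff ℝ (⊤ : ℕ∞) (Z l))
    (P Q : Polynomial ℝ)
    (hP : P = ∏ k ∈ Finset.Icc 1 d, (X + C ((k : ℝ) ^ 2)))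
    (hQ : Q = ∏ j ∈ Finset.Icc 1 d, (X ^ 2 + C ((j : ℝ) ^ 2)))
    (r : ℕ) (hr : 1 ≤ r) (p : ℝ × ℝ × (Fin n → ℝ)) :
    (∑ k ∈ Finset.range (2 * d + 1),
        Q.coeff k • adIter (Vfield n h) (Wfield n d Z) (r + k - 1) p) =
      (0,
        -∑ l ∈ Finset.Icc 1 (2 * d),
          (2 * (Polynomial.derivative P).eval (-((((l + 1) / 2 : ℕ) : ℝ)) ^ 2)) *
            iteratedDeriv r (phi l) p.1 * fderiv ℝ h p.2.2 (Z l p.2.2),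
        0) := by
  obtain ⟨x, y, z⟩ := p
  -- basic facts
  have hcomp : P.comp (X ^ 2 : ℝ[X]) = Q := by
    rw [hP, hQ, prod_comp]
    exact Finset.prod_congr rfl fun k _ => by simp [add_comp]
  have hdeg : Q.natDegree < 2 * d + 1 := by
    have h1 : Q.natDegree ≤ ∑ j ∈ Finset.Icc 1 d, ((X ^ 2 + C ((j : ℝ) ^ 2)).natDegree) := by
      rw [hQ]; exact natDegree_prod_le _ _
    have h2 : ∑ j ∈ Finset.Icc 1 d, ((X ^ 2 + C ((j : ℝ) ^ 2)).natDegree) ≤ 2 * d := by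
      calc ∑ j ∈ Finset.Icc 1 d, ((X ^ 2 + C ((j : ℝ) ^ 2)).natDegree)
          ≤ ∑ _j ∈ Finset.Icc 1 d, 2 := by
            refine Finset.sum_le_sum fun j _ => ?_
            refine le_trans (natDegree_add_le _ _) ?_
            simp [natDegree_X_pow]
        _ = 2 * d := by simp [Nat.card_Icc, mul_comm]
    omega
  have hjmem : ∀ l ∈ Finset.Icc 1 (2 * d), ((l + 1) / 2 : ℕ) ∈ Finset.Icc 1 d := by
    intro l hl
    simp only [Finset.mem_Icc] at hl ⊢
    omega
  have hPeval : ∀ l ∈ Finset.Icc 1 (2 * d),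
      P.eval (-((((l + 1) / 2 : ℕ) : ℝ)) ^ 2) = 0 := by
    intro l hl
    rw [hP, eval_prod]
    refine Finset.prod_eq_zero (hjmem l hl) ?_
    simp
  have hcne : ∀ l ∈ Finset.Icc 1 (2 * d),
      (-((((l + 1) / 2 : ℕ) : ℝ)) ^ 2) ≠ 0 := by
    intro l hl
    have := hjmem l hl
    simp only [Finset.mem_Icc] at this
    have h1 : (1 : ℝ) ≤ (((l + 1) / 2 : ℕ) : ℝ) := by exact_mod_cast this.1
    have h2 : (0 : ℝ) < ((((l + 1) / 2 : ℕ) : ℝ)) ^ 2 := by positivity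
    exact ne_of_lt (by nlinarith)
  have hfphi : ∀ l, ∀ i, iteratedDeriv (i + 2) (phi l) =
      fun x => (-((((l + 1) / 2 : ℕ) : ℝ)) ^ 2) * iteratedDeriv i (phi l) x :=
    fun l i => iteratedDeriv_phi_add_two l i
  -- Fact A
  have FactA : ∀ l ∈ Finset.Icc 1 (2 * d),
      ∑ k ∈ Finset.range (2 * d + 1),
        Q.coeff k * iteratedDeriv (r + k - 1) (phi l) x = 0 := by
    intro l hl
    have h0 := sumA (hfphi l) P (r - 1) x
    rw [hcomp, hPeval l hl, zero_mul,
      Polynomial.sum_over_range' Q (fun m => by simp) (2 * d + 1) hdeg] at h0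
    rw [Finset.sum_congr rfl (fun k _ => by
      rw [show r + k - 1 = (r - 1) + k from by omega])]
    exact h0
  -- Fact B
  have FactB : ∀ l ∈ Finset.Icc 1 (2 * d),
      ∑ k ∈ Finset.range (2 * d + 1),
        Q.coeff k * ((r + k - 1 : ℕ) : ℝ) * iteratedDeriv (r + k - 1 - 1) (phi l) x =
      (2 * (Polynomial.derivative P).eval (-((((l + 1) / 2 : ℕ) : ℝ)) ^ 2)) *
        iteratedDeriv r (phi l) x := by
    intro l hl
    set c : ℝ := -((((l + 1) / 2 : ℕ) : ℝ)) ^ 2 with hc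
    have hB := sumB (hfphi l) hr P x
    rw [hcomp, hPeval l hl, mul_zero, zero_add] at hB
    rw [Polynomial.sum_over_range' Q (fun m => by simp) (2 * d + 1) hdeg] at hB
    refine mul_left_cancel₀ (hcne l hl) ?_
    rw [hB]
    ring
  -- assemble
  simp only [adIter_eq hh hZ, Ffield, Prod.smul_mk, smul_eq_mul, mul_zero]
  refine Prod.ext ?_ (Prod.ext ?_ ?_)
  · rw [Prod.fst_sum]; simp
  · rw [Prod.snd_sum, Prod.fst_sum]
    simp only
    -- goal : ∑ k, Q.coeff k * (-(↑(r+k-1)) * ∑ l, T k l * G l) = -∑ l, (2 e l) * iter * G l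
    simp only [neg_mul, mul_neg, Finset.mul_sum, ← Finset.sum_neg_distrib]
    rw [Finset.sum_comm]
    refine Finset.sum_congr rfl fun l hl => ?_
    rw [Finset.sum_neg_distrib, neg_inj, ← FactB l hl, Finset.sum_mul]
    exact Finset.sum_congr rfl fun k _ => by ring
  · rw [Prod.snd_sum, Prod.snd_sum]
    simp only
    simp only [Finset.smul_sum, smul_smul]
    rw [Finset.sum_comm]
    refine Finset.sum_eq_zero fun l hl => ?_
    rw [← Finset.sum_smul, FactA l hl, zero_smul]
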